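/- arXiv:2502.08206 — 7 statements merged into one kernel-verified Lean document; each statement's English description precedes it below -/
import Mathlib

section
/- Buzen's recursion computes the normalizing constant: for n ≥ 2 clients and m ≥ 1 tasks, Z_{n,m} = Z_{n-1,m} + (p_n/μ_n) · Z_{n,m-1}, where Z_{ν,μ} = Σ_{x ∈ X_{ν,μ}} Π_{i=1}^{ν} (p_i/μ_i)^{x_i} and X_{ν,μ} is the set of vectors in ℕ^ν with ℓ1-norm μ. -/
open Finset

/-- Normalizing constant of the closed Jackson network with `ν` clients and `μm` tasks:
`Z ν μm = Σ_{x ∈ ℕ^ν, |x|₁ = μm} Π_{i<ν} (p i / μ i)^(x i)`. -/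
noncomputable def buzenZ (p μ : ℕ → ℝ) (ν μm : ℕ) : ℝ :=
  ∑ x ∈ Finset.Nat.antidiagonalTuple ν μm, ∏ i : Fin ν, (p (i : ℕ) / μ (i : ℕ)) ^ (x i)

/-!
Splitting a tuple `x ∈ ℕ^(ν+1)` with `|x|₁ = m` into its first `ν` coordinates and its last one
gives the convolution `Z_{ν+1,m} = Σ_{a+b=m} Z_{ν,a} · r_ν^b` with `r_ν = p_ν/μ_ν`, i.e. the
generating function of `Z_{ν+1,·}` is that of `Z_{ν,·}` times `1/(1 - r_ν t)`. Separating the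
term `b = 0` and factoring one `r_ν` out of the others is Buzen's recursion.
-/

namespace Finset.Nat

theorem sum_antidiagonalTuple_succ {M : Type*} [AddCommMonoid M] (k n : ℕ)
    (f : (Fin (k + 1) → ℕ) → M) :
    ∑ x ∈ antidiagonalTuple (k + 1) n, f x
      = ∑ p ∈ antidiagonal n, ∑ y ∈ antidiagonalTuple k p.1, f (Fin.snoc y p.2) := by
  rw [sum_sigma']
  symm
  refine sum_nbij' (fun s ↦ Fin.snoc s.2 s.1.2)
    (fun x ↦ ⟨(n - x (Fin.last k), x (Fin.last k)), Fin.init x⟩) ?_ ?_ ?_ ?_ (fun _ _ ↦ rfl)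
  · rintro ⟨⟨a, b⟩, y⟩ h
    simp only [mem_sigma, HasAntidiagonal.mem_antidiagonal, mem_antidiagonalTuple] at h
    simp [mem_antidiagonalTuple, Fin.sum_univ_castSucc, h.2, h.1]
  · intro x hx
    simp only [mem_antidiagonalTuple, Fin.sum_univ_castSucc] at hx
    simp [mem_antidiagonalTuple, Fin.init, ← hx]
  · rintro ⟨⟨a, b⟩, y⟩ h
    simp only [mem_sigma, HasAntidiagonal.mem_antidiagonal] at h
    simp [← h.1]
  · intro x _
    simp [Fin.snoc_init_self]

end Finset.Nat

section CompleteHomogeneous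

variable {R : Type*} [CommSemiring R] {k : ℕ}

/-- The complete homogeneous symmetric polynomial `h_n` evaluated at `w`. -/
def completeHomogeneous (w : Fin k → R) (n : ℕ) : R :=
  ∑ x ∈ Nat.antidiagonalTuple k n, ∏ i, w i ^ x i

theorem completeHomogeneous_succ_eq_sum_antidiagonal (w : Fin (k + 1) → R) (n : ℕ) :
    completeHomogeneous w n
      = ∑ p ∈ antidiagonal n, completeHomogeneous (Fin.init w) p.1 * w (Fin.last k) ^ p.2 := by
  simp only [completeHomogeneous, Nat.sum_antidiagonalTuple_succ, Fin.prod_univ_castSucc,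
    Fin.snoc_castSucc, Fin.snoc_last, sum_mul, Fin.init]

theorem completeHomogeneous_succ_succ (w : Fin (k + 1) → R) (n : ℕ) :
    completeHomogeneous w (n + 1)
      = completeHomogeneous (Fin.init w) (n + 1) + w (Fin.last k) * completeHomogeneous w n := by
  rw [completeHomogeneous_succ_eq_sum_antidiagonal, Nat.sum_antidiagonal_succ',
    completeHomogeneous_succ_eq_sum_antidiagonal, mul_sum]
  simp only [pow_zero, mul_one, pow_succ]
  congr 1
  refine sum_congr rfl fun _ _ ↦ ?_
  ring

end CompleteHomogeneous

theorem buzen_recursion_general (n m : ℕ) (hn : 2 ≤ n) (hm : 1 ≤ m)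
    (p μ : ℕ → ℝ) :
    buzenZ p μ n m
      = buzenZ p μ (n - 1) m + (p (n - 1) / μ (n - 1)) * buzenZ p μ n (m - 1) := by
  obtain ⟨ν, rfl⟩ : ∃ ν, n = ν + 1 := ⟨n - 1, by omega⟩
  obtain ⟨k, rfl⟩ : ∃ k, m = k + 1 := ⟨m - 1, by omega⟩
  exact completeHomogeneous_succ_succ (fun i : Fin (ν + 1) ↦ p i / μ i) k

/-- Buzen's recursion: for `n ≥ 2` clients and `m ≥ 1` tasks,
`Z_{n,m} = Z_{n-1,m} + (p_n/μ_n) · Z_{n,m-1}`. -/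
theorem buzen_recursion (n m : ℕ) (hn : 2 ≤ n) (hm : 1 ≤ m)
    (p μ : ℕ → ℝ) (hp : ∀ i, 0 < p i) (hμ : ∀ i, 0 < μ i) :
    buzenZ p μ n m
      = buzenZ p μ (n - 1) m + (p (n - 1) / μ (n - 1)) * buzenZ p μ n (m - 1) :=
  buzen_recursion_general n m hn hm p μ
end

section
/- Let ρ_i = p_i/μ_i > 0. The expected value E_m[X_i] of coordinate i under the product-form distribution π_{n,m} on {x ∈ ℕ^n : |x|_1 = m} is a non-decreasing function of m: E_{m+1}[X_i] ≥ E_m[X_i] for all m ∈ ℕ. -/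
open Finset

/-- Normalizing constant with loads `ρ`: `Z_{n,m} = Σ_{x ∈ ℕ^n, |x|₁ = m} Π_i ρ_i^(x i)`. -/
noncomputable def Zrho (n : ℕ) (ρ : Fin n → ℝ) (m : ℕ) : ℝ :=
  ∑ x ∈ Finset.Nat.antidiagonalTuple n m, ∏ i, ρ i ^ (x i)

lemma Zrho_one (ρ : Fin 1 → ℝ) (m : ℕ) : Zrho 1 ρ m = ρ 0 ^ m := by
  simp [Zrho, Finset.Nat.antidiagonalTuple_one]

lemma Zrho_pos {n : ℕ} (hn : 1 ≤ n) {ρ : Fin n → ℝ} (hρ : ∀ i, 0 < ρ i) (m : ℕ) :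
    0 < Zrho n ρ m := by
  have i0 : Fin n := ⟨0, hn⟩
  apply Finset.sum_pos'
  · intro x _
    exact Finset.prod_nonneg fun l _ => pow_nonneg (hρ l).le _
  · refine ⟨fun j => if j = i0 then m else 0, ?_, ?_⟩
    · rw [Finset.Nat.mem_antidiagonalTuple]
      simp
    · exact Finset.prod_pos fun l _ => pow_pos (hρ l) _

lemma Zrho_succ (n : ℕ) (ρ : Fin (n + 1) → ℝ) (m : ℕ) :
    Zrho (n + 1) ρ m =
      ∑ p ∈ Finset.HasAntidiagonal.antidiagonal m, ρ 0 ^ p.1 * Zrho n (fun j => ρ j.succ) p.2 := by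
  simp only [Zrho, Finset.mul_sum]
  rw [Finset.sum_sigma']
  refine Finset.sum_nbij' (fun x => (⟨(x 0, ∑ j : Fin n, x j.succ), Fin.tail x⟩ : Σ _ : ℕ × ℕ, Fin n → ℕ))
    (fun p => Fin.cons p.1.1 p.2) ?_ ?_ ?_ ?_ ?_
  · intro x hx
    rw [Finset.Nat.mem_antidiagonalTuple] at hx
    refine Finset.mem_sigma.2 ⟨?_, ?_⟩
    · rw [Finset.HasAntidiagonal.mem_antidiagonal]
      rw [← hx, Fin.sum_univ_succ]
    · rw [Finset.Nat.mem_antidiagonalTuple]; rfl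
  · intro p hp
    rw [Finset.mem_sigma, Finset.HasAntidiagonal.mem_antidiagonal, Finset.Nat.mem_antidiagonalTuple] at hp
    rw [Finset.Nat.mem_antidiagonalTuple, Fin.sum_univ_succ]
    simp [hp.2, hp.1]
  · intro x hx
    exact Fin.cons_self_tail x
  · intro p hp
    rw [Finset.mem_sigma, Finset.Nat.mem_antidiagonalTuple] at hp
    ext : 1
    · have h2 : ∑ i, p.snd i = p.fst.2 := hp.2
      simp [h2, Prod.ext_iff]
    · simp [Fin.tail_cons]
  · intro x hx
    rw [Fin.prod_univ_succ]
    simp [Fin.tail]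

noncomputable def Srho (n : ℕ) (ρ : Fin n → ℝ) (m : ℕ) (i : Fin n) : ℝ :=
  ∑ x ∈ Finset.Nat.antidiagonalTuple n m, (x i : ℝ) * ∏ l, ρ l ^ (x l)

lemma prod_pow_update {n : ℕ} (ρ : Fin n → ℝ) (x : Fin n → ℕ) (i : Fin n) (b : ℕ) :
    ∏ l, ρ l ^ (Function.update x i b l) = ρ i ^ b * ∏ l ∈ Finset.univ.erase i, ρ l ^ x l := by
  rw [← Finset.mul_prod_erase Finset.univ _ (Finset.mem_univ i), Function.update_self]
  congr 1
  refine Finset.prod_congr rfl fun l hl => ?_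
  rw [Function.update_of_ne (Finset.mem_erase.1 hl).1]

lemma Srho_succ (n : ℕ) (ρ : Fin n → ℝ) (m : ℕ) (i : Fin n) :
    Srho n ρ (m + 1) i = ρ i * (Srho n ρ m i + Zrho n ρ m) := by
  have hRHS : ρ i * (Srho n ρ m i + Zrho n ρ m) =
      ∑ y ∈ Finset.Nat.antidiagonalTuple n m, ((y i : ℝ) + 1) * (ρ i * ∏ l, ρ l ^ (y l)) := by
    rw [Srho, Zrho, ← Finset.sum_add_distrib, Finset.mul_sum]
    exact Finset.sum_congr rfl fun y _ => by ring
  rw [hRHS, Srho]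
  rw [← Finset.sum_filter_of_ne (p := fun x => x i ≠ 0)
    (fun x _ h => fun h0 => h (by simp [h0]))]
  refine Finset.sum_nbij' (fun x => Function.update x i (x i - 1))
    (fun y => Function.update y i (y i + 1)) ?_ ?_ ?_ ?_ ?_
  · intro x hx
    rw [Finset.mem_filter, Finset.Nat.mem_antidiagonalTuple] at hx
    rw [Finset.Nat.mem_antidiagonalTuple, Finset.sum_update_of_mem (Finset.mem_univ i)]
    rw [Finset.sum_eq_sum_sdiff_singleton_add (Finset.mem_univ i)] at hx
    have h2 := hx.2
    omega
  · intro y hy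
    rw [Finset.Nat.mem_antidiagonalTuple] at hy
    rw [Finset.mem_filter, Finset.Nat.mem_antidiagonalTuple,
      Finset.sum_update_of_mem (Finset.mem_univ i)]
    rw [Finset.sum_eq_sum_sdiff_singleton_add (Finset.mem_univ i)] at hy
    constructor
    · omega
    · simp
  · intro x hx
    rw [Finset.mem_filter] at hx
    have h1 : x i ≠ 0 := hx.2
    simp only [Function.update_self, Function.update_idem]
    rw [Nat.sub_add_cancel (Nat.one_le_iff_ne_zero.2 h1), Function.update_eq_self]
  · intro y hy
    simp only [Function.update_self, Function.update_idem, Nat.add_sub_cancel,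
      Function.update_eq_self]
  · intro x hx
    rw [Finset.mem_filter] at hx
    have h1 : 1 ≤ x i := Nat.one_le_iff_ne_zero.2 hx.2
    simp only [Function.update_self]
    rw [prod_pow_update]
    rw [← Finset.mul_prod_erase Finset.univ (fun l => ρ l ^ x l) (Finset.mem_univ i)]
    push_cast [h1]
    have hpow : ρ i ^ x i = ρ i ^ (x i - 1) * ρ i := by
      rw [← pow_succ, Nat.sub_add_cancel h1]
    rw [hpow]
    ring

lemma Zrho_rec (n : ℕ) (ρ : Fin (n + 1) → ℝ) (m : ℕ) :
    Zrho (n + 1) ρ (m + 1) = Zrho n (fun j => ρ j.succ) (m + 1) + ρ 0 * Zrho (n + 1) ρ m := by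
  rw [Zrho_succ n ρ (m + 1), Finset.Nat.sum_antidiagonal_succ, Zrho_succ n ρ m, Finset.mul_sum]
  congr 1
  · simp
  · exact Finset.sum_congr rfl fun p _ => by ring

lemma slc_of_lc (Z : ℕ → ℝ) (hpos : ∀ m, 0 < Z m)
    (hlc : ∀ m, Z m * Z (m + 2) ≤ Z (m + 1) * Z (m + 1)) :
    ∀ a b, a ≤ b → Z a * Z (b + 1) ≤ Z (a + 1) * Z b := by
  intro a b hab
  induction b, hab using Nat.le_induction with
  | base => rw [mul_comm]
  | succ b hab ih =>
    have h1 : Z a * Z (b + 2) * Z b ≤ Z (a + 1) * Z (b + 1) * Z b := by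
      calc Z a * Z (b + 2) * Z b = Z a * (Z b * Z (b + 2)) := by ring
        _ ≤ Z a * (Z (b + 1) * Z (b + 1)) :=
            mul_le_mul_of_nonneg_left (hlc b) (hpos a).le
        _ = (Z a * Z (b + 1)) * Z (b + 1) := by ring
        _ ≤ (Z (a + 1) * Z b) * Z (b + 1) := mul_le_mul_of_nonneg_right ih (hpos _).le
        _ = Z (a + 1) * Z (b + 1) * Z b := by ring
    exact le_of_mul_le_mul_right h1 (hpos b)

lemma Zrho_lc : ∀ n : ℕ, 1 ≤ n → ∀ ρ : Fin n → ℝ, (∀ i, 0 < ρ i) →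
    ∀ m, Zrho n ρ m * Zrho n ρ (m + 2) ≤ Zrho n ρ (m + 1) * Zrho n ρ (m + 1) := by
  intro n
  induction n with
  | zero => omega
  | succ n ih =>
    intro _ ρ hρ m
    rcases Nat.eq_zero_or_pos n with rfl | hn'
    · rw [Zrho_one, Zrho_one, Zrho_one]
      exact le_of_eq (by ring)
    · have hρ' : ∀ j : Fin n, 0 < (fun j : Fin n => ρ j.succ) j := fun j => hρ j.succ
      have ha_pos := Zrho_pos hn' hρ'
      have haslc := slc_of_lc _ ha_pos (ih hn' _ hρ')
      have key : Zrho n (fun j => ρ j.succ) (m + 2) * Zrho (n + 1) ρ m ≤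
          Zrho n (fun j => ρ j.succ) (m + 1) * Zrho (n + 1) ρ (m + 1) := by
        have h1 : Zrho n (fun j => ρ j.succ) (m + 2) * Zrho (n + 1) ρ m ≤
            Zrho n (fun j => ρ j.succ) (m + 1) *
              ∑ p ∈ Finset.HasAntidiagonal.antidiagonal m, ρ 0 ^ p.1 * Zrho n (fun j => ρ j.succ) (p.2 + 1) := by
          rw [Zrho_succ n ρ m, Finset.mul_sum, Finset.mul_sum]
          refine Finset.sum_le_sum fun p hp => ?_
          have hp2 : p.2 ≤ m + 1 := by
            have := Finset.HasAntidiagonal.mem_antidiagonal.1 hp; omega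
          have h := haslc p.2 (m + 1) hp2
          calc Zrho n (fun j => ρ j.succ) (m + 2) * (ρ 0 ^ p.1 * Zrho n (fun j => ρ j.succ) p.2)
              = ρ 0 ^ p.1 * (Zrho n (fun j => ρ j.succ) p.2 * Zrho n (fun j => ρ j.succ) (m + 2)) := by
                ring
            _ ≤ ρ 0 ^ p.1 * (Zrho n (fun j => ρ j.succ) (p.2 + 1) * Zrho n (fun j => ρ j.succ) (m + 1)) :=
                mul_le_mul_of_nonneg_left h (pow_nonneg (hρ 0).le _)
            _ = Zrho n (fun j => ρ j.succ) (m + 1) * (ρ 0 ^ p.1 * Zrho n (fun j => ρ j.succ) (p.2 + 1)) := by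
                ring
        have h2 : ∑ p ∈ Finset.HasAntidiagonal.antidiagonal m, ρ 0 ^ p.1 * Zrho n (fun j => ρ j.succ) (p.2 + 1) ≤
            Zrho (n + 1) ρ (m + 1) := by
          rw [Zrho_succ n ρ (m + 1), Finset.Nat.sum_antidiagonal_succ']
          have h0 : 0 ≤ ρ 0 ^ (m + 1) * Zrho n (fun j => ρ j.succ) 0 :=
            mul_nonneg (pow_nonneg (hρ 0).le _) (ha_pos 0).le
          linarith [le_refl (∑ p ∈ Finset.HasAntidiagonal.antidiagonal m, ρ 0 ^ p.1 * Zrho n (fun j => ρ j.succ) (p.2 + 1))]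
        calc Zrho n (fun j => ρ j.succ) (m + 2) * Zrho (n + 1) ρ m
            ≤ Zrho n (fun j => ρ j.succ) (m + 1) *
              ∑ p ∈ Finset.HasAntidiagonal.antidiagonal m, ρ 0 ^ p.1 * Zrho n (fun j => ρ j.succ) (p.2 + 1) := h1
          _ ≤ Zrho n (fun j => ρ j.succ) (m + 1) * Zrho (n + 1) ρ (m + 1) :=
              mul_le_mul_of_nonneg_left h2 (ha_pos (m + 1)).le
      calc Zrho (n + 1) ρ m * Zrho (n + 1) ρ (m + 2)
          = Zrho (n + 1) ρ m * (Zrho n (fun j => ρ j.succ) (m + 2) + ρ 0 * Zrho (n + 1) ρ (m + 1)) := by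
            rw [← Zrho_rec]
        _ = Zrho n (fun j => ρ j.succ) (m + 2) * Zrho (n + 1) ρ m +
            ρ 0 * Zrho (n + 1) ρ m * Zrho (n + 1) ρ (m + 1) := by ring
        _ ≤ Zrho n (fun j => ρ j.succ) (m + 1) * Zrho (n + 1) ρ (m + 1) +
            ρ 0 * Zrho (n + 1) ρ m * Zrho (n + 1) ρ (m + 1) := by linarith
        _ = (Zrho n (fun j => ρ j.succ) (m + 1) + ρ 0 * Zrho (n + 1) ρ m) * Zrho (n + 1) ρ (m + 1) := by
            ring
        _ = Zrho (n + 1) ρ (m + 1) * Zrho (n + 1) ρ (m + 1) := by rw [← Zrho_rec]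

lemma Srho_zero (n : ℕ) (ρ : Fin n → ℝ) (i : Fin n) : Srho n ρ 0 i = 0 := by
  simp [Srho, Finset.Nat.antidiagonalTuple_zero_right]

lemma Srho_closed (n : ℕ) (ρ : Fin n → ℝ) (i : Fin n) :
    ∀ m, Srho n ρ (m + 1) i = ∑ p ∈ Finset.HasAntidiagonal.antidiagonal m, ρ i ^ (p.1 + 1) * Zrho n ρ p.2 := by
  intro m
  induction m with
  | zero =>
    rw [Srho_succ, Srho_zero]
    simp [Finset.Nat.antidiagonal_zero]
  | succ m ih =>
    rw [Srho_succ, ih, Finset.Nat.sum_antidiagonal_succ]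
    rw [mul_add, Finset.mul_sum, add_comm]
    congr 1
    · simp [pow_one]
    · exact Finset.sum_congr rfl fun p _ => by ring

lemma Srho_nonneg {n : ℕ} {ρ : Fin n → ℝ} (hρ : ∀ i, 0 < ρ i) (m : ℕ) (i : Fin n) :
    0 ≤ Srho n ρ m i :=
  Finset.sum_nonneg fun x _ =>
    mul_nonneg (Nat.cast_nonneg _) (Finset.prod_nonneg fun l _ => pow_nonneg (hρ l).le _)


/-- Expectation of coordinate `i` under `π_{n,m}(x) = (Π_j ρ_j^(x j)) / Z_{n,m}`. -/
noncomputable def meanXrho (n : ℕ) (ρ : Fin n → ℝ) (m : ℕ) (i : Fin n) : ℝ :=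
  ∑ x ∈ Finset.Nat.antidiagonalTuple n m,
    (x i : ℝ) * ((∏ l, ρ l ^ (x l)) / Zrho n ρ m)

lemma meanXrho_eq (n : ℕ) (ρ : Fin n → ℝ) (m : ℕ) (i : Fin n) :
    meanXrho n ρ m i = Srho n ρ m i / Zrho n ρ m := by
  simp [meanXrho, Srho, Finset.sum_div, mul_div_assoc]

/-- Monotonicity of the mean queue length in the number `m` of tasks:
`E_{m+1}[X_i] ≥ E_m[X_i]` for every `m`. -/
theorem mean_coordinate_monotone (n : ℕ) (hn : 1 ≤ n) (ρ : Fin n → ℝ)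
    (hρ : ∀ i, 0 < ρ i) (i : Fin n) :
    ∀ m : ℕ, meanXrho n ρ m i ≤ meanXrho n ρ (m + 1) i := by
  intro m
  have hZ := Zrho_pos hn hρ
  have hslc := slc_of_lc _ hZ (Zrho_lc n hn ρ hρ)
  rw [meanXrho_eq, meanXrho_eq, div_le_div_iff₀ (hZ m) (hZ (m + 1))]
  cases m with
  | zero =>
    rw [Srho_zero]
    simpa using mul_nonneg (Srho_nonneg hρ 1 i) (hZ 0).le
  | succ m =>
    rw [Srho_closed, Srho_closed, Finset.Nat.sum_antidiagonal_succ', add_mul,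
      Finset.sum_mul, Finset.sum_mul]
    have h0 : 0 ≤ ρ i ^ (m + 1 + 1) * Zrho n ρ 0 * Zrho n ρ (m + 1) :=
      mul_nonneg (mul_nonneg (pow_nonneg (hρ i).le _) (hZ 0).le) (hZ _).le
    have hsum : ∑ p ∈ Finset.HasAntidiagonal.antidiagonal m, ρ i ^ (p.1 + 1) * Zrho n ρ p.2 * Zrho n ρ (m + 1 + 1) ≤
        ∑ p ∈ Finset.HasAntidiagonal.antidiagonal m, ρ i ^ (p.1 + 1) * Zrho n ρ (p.2 + 1) * Zrho n ρ (m + 1) := by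
      refine Finset.sum_le_sum fun p hp => ?_
      have hp2 : p.2 ≤ m + 1 := by have := Finset.HasAntidiagonal.mem_antidiagonal.1 hp; omega
      have h := hslc p.2 (m + 1) hp2
      calc ρ i ^ (p.1 + 1) * Zrho n ρ p.2 * Zrho n ρ (m + 1 + 1)
          = ρ i ^ (p.1 + 1) * (Zrho n ρ p.2 * Zrho n ρ (m + 1 + 1)) := by ring
        _ ≤ ρ i ^ (p.1 + 1) * (Zrho n ρ (p.2 + 1) * Zrho n ρ (m + 1)) :=
            mul_le_mul_of_nonneg_left h (pow_nonneg (hρ i).le _)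
        _ = ρ i ^ (p.1 + 1) * Zrho n ρ (p.2 + 1) * Zrho n ρ (m + 1) := by ring
    simp only
    linarith
end

section
/- The identity V_{n,m} = Z_{n,m-1} holds, where V_{n,m} = Σ_{x ∈ ℕ^n, |x|_1 = m} (Σ_{i: x_i ≥ 1} μ_i) Π_{j=1}^n (p_j/μ_j)^{x_j} and Z_{n,m-1} = Σ_{y ∈ ℕ^n, |y|_1 = m-1} Π_{j=1}^n (p_j/μ_j)^{y_j}, provided Σ_{i=1}^n p_i = 1. -/
open Finset

/-- Normalizing constant `Z_{n,μm} = Σ_{x ∈ ℕ^n, |x|₁ = μm} Π_j (p j / μ j)^(x j)`. -/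
noncomputable def Zconst (n : ℕ) (p μ : Fin n → ℝ) (μm : ℕ) : ℝ :=
  ∑ x ∈ Finset.Nat.antidiagonalTuple n μm, ∏ j, (p j / μ j) ^ (x j)

/-!
Split the weight `Σ_{i : x_i ≥ 1} μ_i` into its summands and exchange the sums. For a fixed `i`,
the tuples of size `m` with `x_i ≥ 1` are exactly `y + e_i` with `|y|₁ = m - 1`, and the
monomial of `y + e_i` is `(p_i / μ_i)` times that of `y`. So the `i`-th summand is
`μ_i · (p_i / μ_i) · Z_{n,m-1} = p_i · Z_{n,m-1}`, and `Σ_i p_i = 1` concludes.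
-/

theorem Finset.Nat.filter_one_le_antidiagonalTuple_succ {n : ℕ} (k : ℕ) (i : Fin n) :
    (Nat.antidiagonalTuple n (k + 1)).filter (fun x => 1 ≤ x i) =
      (Nat.antidiagonalTuple n k).map (addRightEmbedding (Pi.single i 1)) := by
  ext x
  simp only [mem_filter, mem_map, Nat.mem_antidiagonalTuple, addRightEmbedding_apply]
  constructor
  · rintro ⟨hsum, hxi⟩
    have hx : x - Pi.single i 1 + Pi.single i 1 = x := by
      ext j
      rcases eq_or_ne j i with rfl | hj <;> simp [*]
    refine ⟨x - Pi.single i 1, ?_, hx⟩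
    rw [← hx] at hsum
    simp only [Pi.add_apply, sum_add_distrib, sum_pi_single'] at hsum
    simpa using hsum
  · rintro ⟨y, rfl, rfl⟩
    simp [sum_add_distrib]

theorem Finset.prod_pow_add_single {ι M : Type*} [Fintype ι] [DecidableEq ι] [CommMonoid M]
    (a : ι → M) (y : ι → ℕ) (i : ι) :
    ∏ j, a j ^ (y + Pi.single i 1 : ι → ℕ) j = a i * ∏ j, a j ^ y j := by
  simp only [Pi.add_apply, pow_add, prod_mul_distrib, mul_comm (a i)]
  congr 1
  rw [Fintype.prod_eq_single i fun j hj => by simp [hj]]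
  simp

theorem sum_filter_one_le_eq_mul_Zconst {n : ℕ} (p μ : Fin n → ℝ) (k : ℕ) (i : Fin n) :
    ∑ x ∈ (Nat.antidiagonalTuple n (k + 1)).filter (fun x => 1 ≤ x i), ∏ j, (p j / μ j) ^ x j =
      p i / μ i * Zconst n p μ k := by
  rw [Nat.filter_one_le_antidiagonalTuple_succ, sum_map, Zconst, mul_sum]
  exact sum_congr rfl fun y _ => prod_pow_add_single _ y i

theorem V_eq_Z_general (n m : ℕ) (hm : 1 ≤ m)
    (p μ : Fin n → ℝ) (hμ : ∀ i, 0 < μ i)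
    (hsum : ∑ i, p i = 1) :
    ∑ x ∈ Finset.Nat.antidiagonalTuple n m,
        (∑ i ∈ Finset.univ.filter (fun i => 1 ≤ x i), μ i) * ∏ j, (p j / μ j) ^ (x j)
      = Zconst n p μ (m - 1) := by
  obtain ⟨k, rfl⟩ := Nat.exists_eq_add_of_le' hm
  calc
    _ = ∑ i : Fin n, μ i * ∑ x ∈ (Nat.antidiagonalTuple n (k + 1)).filter (fun x => 1 ≤ x i),
          ∏ j, (p j / μ j) ^ x j := by
      simp only [sum_mul, mul_sum, sum_filter, ite_mul, mul_ite, zero_mul, mul_zero]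
      exact Finset.sum_comm
    _ = ∑ i : Fin n, p i * Zconst n p μ k := by
      refine sum_congr rfl fun i _ => ?_
      rw [sum_filter_one_le_eq_mul_Zconst, ← mul_assoc, mul_div_cancel₀ _ (hμ i).ne']
    _ = Zconst n p μ (k + 1 - 1) := by rw [← sum_mul, hsum, one_mul, Nat.add_sub_cancel]

/-- `V_{n,m} = Z_{n,m-1}` when `Σ_i p_i = 1`, where
`V_{n,m} = Σ_{|x|₁=m} (Σ_{i : x_i ≥ 1} μ_i) Π_j (p_j/μ_j)^{x_j}`. -/
theorem V_eq_Z (n m : ℕ) (hn : 1 ≤ n) (hm : 1 ≤ m)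
    (p μ : Fin n → ℝ) (hp : ∀ i, 0 < p i) (hμ : ∀ i, 0 < μ i)
    (hsum : ∑ i, p i = 1) :
    ∑ x ∈ Finset.Nat.antidiagonalTuple n m,
        (∑ i ∈ Finset.univ.filter (fun i => 1 ≤ x i), μ i) * ∏ j, (p j / μ j) ^ (x j)
      = Zconst n p μ (m - 1) :=
  V_eq_Z_general n m hm p μ hμ hsum
end

section
/- Under the stationary distribution π_{n,m}(x) ∝ Π_i (p_i/μ_i)^{x_i} on {x ∈ ℕ^n : |x|_1 = m}, the throughput λ = Σ_{i=1}^n μ_i · P(ξ_i > 0) equals Z_{n,m-1}/Z_{n,m}, assuming Σ_i p_i = 1. -/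
open Finset

lemma key_sum (n m : ℕ) (hm : 1 ≤ m) (c : Fin n → ℝ) (i : Fin n) :
    ∑ x ∈ (Finset.Nat.antidiagonalTuple n m).filter (fun x => 0 < x i),
      ∏ j, c j ^ (x j)
    = c i * ∑ y ∈ Finset.Nat.antidiagonalTuple n (m - 1), ∏ j, c j ^ (y j) := by
  rw [Finset.mul_sum]
  refine Finset.sum_bij' (fun x _ => Function.update x i (x i - 1))
    (fun y _ => Function.update y i (y i + 1)) ?_ ?_ ?_ ?_ ?_
  · intro x hx
    simp only [Finset.mem_filter, Finset.Nat.mem_antidiagonalTuple] at hx ⊢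
    rw [Finset.sum_update_of_mem (Finset.mem_univ i)]
    have h1 : ∑ j, x j = x i + ∑ j ∈ Finset.univ \ {i}, x j := by
      rw [← Finset.sum_sdiff (Finset.singleton_subset_iff.2 (Finset.mem_univ i))]
      simp [add_comm]
    omega
  · intro y hy
    simp only [Finset.Nat.mem_antidiagonalTuple] at hy
    simp only [Finset.mem_filter, Finset.Nat.mem_antidiagonalTuple]
    constructor
    · rw [Finset.sum_update_of_mem (Finset.mem_univ i)]
      have h1 : ∑ j, y j = y i + ∑ j ∈ Finset.univ \ {i}, y j := by
        rw [← Finset.sum_sdiff (Finset.singleton_subset_iff.2 (Finset.mem_univ i))]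
        simp [add_comm]
      omega
    · simp
  · intro x hx
    simp only [Finset.mem_filter] at hx
    funext j
    rcases eq_or_ne j i with rfl | h
    · simp only [Function.update_self]
      omega
    · simp [Function.update_of_ne h]
  · intro y hy
    funext j
    rcases eq_or_ne j i with rfl | h
    · simp
    · simp [Function.update_of_ne h]
  · intro x hx
    simp only [Finset.mem_filter] at hx
    rw [Fintype.prod_eq_mul_prod_compl i, Fintype.prod_eq_mul_prod_compl i,
      Function.update_self]
    have h1 : ∀ j ∈ ({i} : Finset (Fin n))ᶜ, c j ^ Function.update x i (x i - 1) j
        = c j ^ x j := by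
      intro j hj
      simp only [Finset.mem_compl, Finset.mem_singleton] at hj
      rw [Function.update_of_ne hj]
    rw [Finset.prod_congr rfl h1, ← mul_assoc]
    congr 1
    rw [← pow_succ']
    congr 1
    omega

/-- Throughput formula: under the stationary distribution
`π_{n,m}(x) = (1/Z_{n,m}) Π_j (p j/μ j)^(x j)` on `{x : |x|₁ = m}`,
`λ = Σ_i μ_i · P(ξ_i > 0) = Z_{n,m-1}/Z_{n,m}`, assuming `Σ_i p_i = 1`. -/
theorem throughput_formula (n m : ℕ) (hn : 1 ≤ n) (hm : 1 ≤ m)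
    (p μ : Fin n → ℝ) (hp : ∀ i, 0 < p i) (hμ : ∀ i, 0 < μ i)
    (hsum : ∑ i, p i = 1) :
    ∑ i, μ i *
        (∑ x ∈ (Finset.Nat.antidiagonalTuple n m).filter (fun x => 0 < x i),
          (∏ j, (p j / μ j) ^ (x j)) / Zconst n p μ m)
      = Zconst n p μ (m - 1) / Zconst n p μ m := by
  have hZ : 0 < Zconst n p μ m := by
    apply Finset.sum_pos
    · intro x _
      exact Finset.prod_pos fun j _ => pow_pos (div_pos (hp j) (hμ j)) _
    · refine ⟨fun j => if j = ⟨0, hn⟩ then m else 0, ?_⟩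
      rw [Finset.Nat.mem_antidiagonalTuple]
      simp
  have hstep : ∀ i : Fin n,
      ∑ x ∈ (Finset.Nat.antidiagonalTuple n m).filter (fun x => 0 < x i),
        (∏ j, (p j / μ j) ^ (x j)) / Zconst n p μ m
      = (p i / μ i) * Zconst n p μ (m - 1) / Zconst n p μ m := by
    intro i
    rw [← Finset.sum_div, key_sum n m hm _ i]
    rfl
  calc ∑ i, μ i *
        (∑ x ∈ (Finset.Nat.antidiagonalTuple n m).filter (fun x => 0 < x i),
          (∏ j, (p j / μ j) ^ (x j)) / Zconst n p μ m)
      = ∑ i, p i * (Zconst n p μ (m - 1) / Zconst n p μ m) := by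
        refine Finset.sum_congr rfl fun i _ => ?_
        rw [hstep i]
        have h1 := (hμ i).ne'
        have h2 := hZ.ne'
        field_simp
    _ = Zconst n p μ (m - 1) / Zconst n p μ m := by
        rw [← Finset.sum_mul, hsum, one_mul]
end

section
/- Squeeze inequality for cumulative relative delays: in the deterministic sequence setting where X_{i,s} = Σ_{t=1}^∞ 1{A_t = i, t ≤ s < t + D_{i,t}}, the bounds Σ_{t=1}^T X_{i,t} ≤ Σ_{t=1}^T D_{i,t} ≤ Σ_{t=1}^{T+R_{i,T}} X_{i,t} hold for each T ≥ 1, where D_{i,t} = 1{A_t = i}·R_{i,t} and D_{i,t} ≤ R_{i,T} + (T − t) for t ≤ T whenever A_t = i. -/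
/-!
Each round `t` with `a t` keeps its task in the queue exactly during the rounds
`s ∈ [t, t + D t)`, so `X s` counts the intervals covering `s`. Summing over `s ≤ S` and
exchanging the sums, round `t` contributes the length of `[t, t + D t) ∩ [1, S]`: at most `D t`,
and exactly `D t` once the interval ends by `S`. For `S = T + R T` this holds for every `t ≤ T`,
since `D t ≤ R T + (T - t)`.
-/

open Finset

def occupancy (p : ℕ → Prop) [DecidablePred p] (d : ℕ → ℕ) (s : ℕ) : ℕ :=
  ∑ t ∈ Icc 1 s, if p t ∧ s < t + d t then 1 else 0

theorem sum_Icc_one_sum_Icc_one_comm {M : Type*} [AddCommMonoid M] (S : ℕ) (f : ℕ → ℕ → M) :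
    ∑ s ∈ Icc 1 S, ∑ t ∈ Icc 1 s, f t s = ∑ t ∈ Icc 1 S, ∑ s ∈ Icc t S, f t s :=
  sum_comm' fun s t => by simp only [mem_Icc]; omega

theorem filter_Icc_lt_add_eq_Ico (t S d : ℕ) :
    (Icc t S).filter (· < t + d) = Ico t (min (S + 1) (t + d)) := by
  ext s
  simp only [mem_filter, mem_Icc, mem_Ico]
  omega

theorem sum_occupancy_Icc (p : ℕ → Prop) [DecidablePred p] (d : ℕ → ℕ) (S : ℕ) :
    ∑ s ∈ Icc 1 S, occupancy p d s =
      ∑ t ∈ Icc 1 S, if p t then min (S + 1) (t + d t) - t else 0 := by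
  simp only [occupancy, sum_Icc_one_sum_Icc_one_comm, ite_and, sum_ite_irrel, sum_const_zero]
  refine sum_congr rfl fun t _ => ?_
  rw [sum_boole, filter_Icc_lt_add_eq_Ico, Nat.card_Ico, Nat.cast_id]

theorem sum_occupancy_le (p : ℕ → Prop) [DecidablePred p] (d : ℕ → ℕ) (S : ℕ) :
    ∑ s ∈ Icc 1 S, occupancy p d s ≤ ∑ t ∈ Icc 1 S, d t := by
  rw [sum_occupancy_Icc]
  gcongr with t
  split_ifs <;> omega

theorem sum_le_sum_occupancy (p : ℕ → Prop) [DecidablePred p] (d : ℕ → ℕ) {T S : ℕ}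
    (hTS : T ≤ S) (hd : ∀ t, ¬p t → d t = 0) (hend : ∀ t ∈ Icc 1 T, p t → t + d t ≤ S + 1) :
    ∑ t ∈ Icc 1 T, d t ≤ ∑ s ∈ Icc 1 S, occupancy p d s := by
  rw [sum_occupancy_Icc]
  calc ∑ t ∈ Icc 1 T, d t
      = ∑ t ∈ Icc 1 T, if p t then min (S + 1) (t + d t) - t else 0 := by
        refine sum_congr rfl fun t ht => ?_
        by_cases hpt : p t
        · rw [if_pos hpt, min_eq_right (hend t ht hpt)]
          omega
        · rw [if_neg hpt, hd t hpt]
    _ ≤ ∑ t ∈ Icc 1 S, if p t then min (S + 1) (t + d t) - t else 0 :=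
        sum_le_sum_of_subset (Icc_subset_Icc_right hTS)

theorem squeeze_cumulative_delays_general
    (a : ℕ → Prop) [DecidablePred a] (R D X : ℕ → ℕ)
    (hD : ∀ t, D t = if a t then R t else 0)
    (hX : ∀ s, X s = ∑ t ∈ Finset.Icc 1 s, (if a t ∧ s < t + D t then 1 else 0))
    (hbound : ∀ T, ∀ t ∈ Finset.Icc 1 T, a t → D t ≤ R T + (T - t))
    (T : ℕ) :
    ∑ t ∈ Finset.Icc 1 T, X t ≤ ∑ t ∈ Finset.Icc 1 T, D t ∧
    ∑ t ∈ Finset.Icc 1 T, D t ≤ ∑ t ∈ Finset.Icc 1 (T + R T), X t := by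
  obtain rfl : X = occupancy a D := funext hX
  refine ⟨sum_occupancy_le a D T, sum_le_sum_occupancy a D (Nat.le_add_right T (R T)) ?_ ?_⟩
  · intro t hat
    simp [hD t, hat]
  · intro t ht hat
    have := hbound T t ht hat
    rw [mem_Icc] at ht
    omega

/-- Squeeze inequality for cumulative relative delays. Here `a t` says that
round `t ≥ 1` routes a task to the fixed client `i` (`A_t = i`), `R t = R_{i,t}`,
`D t = D_{i,t} = 1{A_t = i}·R_{i,t}`, and `X s = X_{i,s}` admits the representation
`X_{i,s} = Σ_{t≥1} 1{A_t = i, t ≤ s < t + D_{i,t}}` (only `1 ≤ t ≤ s` can contribute).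
Then `Σ_{t=1}^T X_{i,t} ≤ Σ_{t=1}^T D_{i,t} ≤ Σ_{t=1}^{T+R_{i,T}} X_{i,t}`. -/
theorem squeeze_cumulative_delays
    (a : ℕ → Prop) [DecidablePred a] (R D X : ℕ → ℕ)
    (hD : ∀ t, D t = if a t then R t else 0)
    (hX : ∀ s, X s = ∑ t ∈ Finset.Icc 1 s, (if a t ∧ s < t + D t then 1 else 0))
    (hbound : ∀ T, ∀ t ∈ Finset.Icc 1 T, a t → D t ≤ R T + (T - t))
    (T : ℕ) (hT : 1 ≤ T) :
    ∑ t ∈ Finset.Icc 1 T, X t ≤ ∑ t ∈ Finset.Icc 1 T, D t ∧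
    ∑ t ∈ Finset.Icc 1 T, D t ≤ ∑ t ∈ Finset.Icc 1 (T + R T), X t :=
  squeeze_cumulative_delays_general a R D X hD hX hbound T
end

section
/- If X_{i,0} = 0 then for every s ∈ ℕ, the queue length admits the representation X_{i,s} = Σ_{t=1}^∞ 1{A_t = i, t ≤ s < t + D_{i,t}}, i.e., the number of tasks at client i at time s equals the number of tasks sent to i that have arrived by time s but not yet departed. -/
/-!
Telescoping the recursion writes `X s` as the number of arrivals at `i` up to time `s` minus the
number of departures from `i` up to time `s`. Since `t ≤ t + D t`, the bijection `t ↦ t + D t`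
matches the departures up to `s` exactly with the arrivals `t` for which `t + D t ≤ s`; what is
left are the arrivals with `s < t + D t`.
-/

open Finset

theorem eq_sum_Icc_of_eq_add {f g : ℕ → ℤ} (h0 : f 0 = 0)
    (hstep : ∀ t, 1 ≤ t → f t = f (t - 1) + g t) (s : ℕ) :
    f s = ∑ t ∈ Icc 1 s, g t := by
  induction s with
  | zero => simp [h0]
  | succ k ih =>
    rw [sum_Icc_succ_top (by omega), ← ih, hstep (k + 1) (by omega), Nat.add_sub_cancel]

theorem card_filter_map_le_eq_card_filter {α : Type*} [Preorder α] [LocallyFiniteOrder α]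
    [DecidableLE α] {φ : α → α} {p q : α → Prop} [DecidablePred p] [DecidablePred q] {a : α}
    (hφ : Set.BijOn φ {t | p t} {u | q u}) (hp : ∀ t, p t → a ≤ t ∧ t ≤ φ t) (s : α) :
    #{t ∈ Icc a s | p t ∧ φ t ≤ s} = #{u ∈ Icc a s | q u} := by
  refine card_nbij φ (fun t ht => ?_) (hφ.injOn.mono fun t ht => ?_) (fun u hu => ?_)
  · simp only [coe_filter, mem_Icc, Set.mem_ofPred_eq] at ht ⊢
    exact ⟨⟨(hp t ht.2.1).1.trans (hp t ht.2.1).2, ht.2.2⟩, hφ.mapsTo ht.2.1⟩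
  · exact (mem_filter.1 ht).2.1
  · simp only [coe_filter, mem_Icc, Set.mem_ofPred_eq] at hu
    obtain ⟨t, ht, rfl⟩ := hφ.surjOn hu.2
    have hts : t ≤ s := (hp t ht).2.trans hu.1.2
    exact ⟨t, mem_filter.2 ⟨mem_Icc.2 ⟨(hp t ht).1, hts⟩, ht, hu.1.2⟩, rfl⟩

theorem queue_length_representation_general (n : ℕ) (i : Fin n)
    (A C : ℕ → Fin n) (X D : ℕ → ℕ)
    (hX0 : X 0 = 0)
    (hXrec : ∀ t, 1 ≤ t →
      (X t : ℤ) = X (t - 1) + (if A t = i then 1 else 0) - (if C t = i then 1 else 0))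
    (hbij : Set.BijOn (fun t => t + D t) {t | 1 ≤ t ∧ A t = i} {t | 1 ≤ t ∧ C t = i}) :
    ∀ s, X s = ∑ t ∈ Finset.Icc 1 s, (if A t = i ∧ s < t + D t then 1 else 0) := by
  intro s
  have arrivals_sub_departures :
      (X s : ℤ) = #{t ∈ Icc 1 s | A t = i} - #{t ∈ Icc 1 s | C t = i} := by
    rw [eq_sum_Icc_of_eq_add (f := fun t => (X t : ℤ)) (by simp [hX0])
      (fun t ht => by rw [hXrec t ht, add_sub_assoc]) s]
    simp only [sum_sub_distrib, sum_boole]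
  have departed := card_filter_map_le_eq_card_filter hbij
    (fun t ht => ⟨ht.1, Nat.le_add_right t (D t)⟩) s
  have split := card_filter_add_card_filter_not (s := {t ∈ Icc 1 s | A t = i})
    (fun t => s < t + D t)
  simp only [filter_filter, not_lt] at split
  have filter_one_le_and (P : ℕ → Prop) [DecidablePred P] :
      {t ∈ Icc 1 s | 1 ≤ t ∧ P t} = {t ∈ Icc 1 s | P t} :=
    filter_congr fun t ht => and_iff_right (mem_Icc.1 ht).1
  simp only [and_assoc, filter_one_le_and] at departed
  rw [sum_boole, Nat.cast_id]
  omega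

/-- Queue-length representation: if `X_{i,0} = 0`, then for every `s`,
`X_{i,s} = Σ_{t=1}^∞ 1{A_t = i, t ≤ s < t + D_{i,t}}`, the number of tasks routed to
client `i` that have arrived by round `s` but not yet departed. -/
theorem queue_length_representation (n : ℕ) (i : Fin n)
    (A C : ℕ → Fin n) (X D : ℕ → ℕ)
    (hX0 : X 0 = 0)
    (hXrec : ∀ t, 1 ≤ t →
      (X t : ℤ) = X (t - 1) + (if A t = i then 1 else 0) - (if C t = i then 1 else 0))
    (hD0 : ∀ t, A t ≠ i → D t = 0)
    (hD : ∀ t, 1 ≤ t → A t = i →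
      IsLeast {r : ℕ |
        (∑ s ∈ Finset.Icc t (t + r), (if C s = i then 1 else 0)) = X (t - 1) + 1} (D t))
    (hmono : StrictMonoOn (fun t => t + D t) {t | 1 ≤ t ∧ A t = i})
    (hbij : Set.BijOn (fun t => t + D t) {t | 1 ≤ t ∧ A t = i} {t | 1 ≤ t ∧ C t = i}) :
    ∀ s, X s = ∑ t ∈ Finset.Icc 1 s, (if A t = i ∧ s < t + D t then 1 else 0) :=
  queue_length_representation_general n i A C X D hX0 hXrec hbij
end

section
/- For each client i, the map t ↦ t + D_{i,t} is a strictly increasing bijection from the set {t ≥ 1 : A_t = i} of arrival rounds at client i onto the set {t ≥ 1 : C_t = i} of completion rounds at client i. -/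
/-!
Count the arrivals and completions at client `i` up to each round. Conservation of tasks says
that the queue length `X t` is their difference, so completions never outnumber arrivals, and
the defining property of `R t` says that `t + R t` is the round at which the completion count
first reaches the arrival count at `t`. Hence an arrival and its completion have the same rank
among arrivals and among completions respectively: the map is the first-in-first-out matching
of the `k`-th arrival with the `k`-th completion, which is increasing and bijective.
-/

open Finset

namespace Nat

theorem count_add_sum_Icc_ite (p : ℕ → Prop) [DecidablePred p] (t r : ℕ) :
    count p t + ∑ s ∈ Icc t (t + r), (if p s then 1 else 0) = count p (t + r + 1) := by
  induction r with
  | zero => rw [add_zero, Icc_self, sum_singleton, count_succ]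
  | succ r ih =>
    rw [← add_assoc, sum_Icc_succ_top (by omega), ← add_assoc, ih]
    exact (count_succ _ _).symm

variable {p q : ℕ → Prop} [DecidablePred p] [DecidablePred q]

theorem apply_and_count_eq_of_isLeast {t k R : ℕ} (h₀ : count q t ≤ k)
    (hR : IsLeast {r | count q (t + r + 1) = k + 1} R) :
    q (t + R) ∧ count q (t + R) = k := by
  obtain ⟨hhit, hleast⟩ := hR
  have hbefore : count q (t + R) ≤ k := by
    rcases R with _ | r
    · exact h₀
    · have hmiss : count q (t + r + 1) ≠ k + 1 := fun h => by
        have := hleast h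
        omega
      have := count_monotone q (show t + r + 1 ≤ t + (r + 1) + 1 by omega)
      simp only [Set.mem_ofPred_eq] at hhit
      rw [← add_assoc] at hhit this ⊢
      omega
  simp only [Set.mem_ofPred_eq, count_succ] at hhit
  split_ifs at hhit with hq
  · exact ⟨hq, by omega⟩
  · omega

theorem strictMonoOn_and_bijOn_of_count_eq (f : ℕ → ℕ) (hfq : ∀ t, p t → q (f t))
    (hrank : ∀ t, p t → count q (f t) = count p t) (hle : ∀ m, count q m ≤ count p m) :
    StrictMonoOn f {t | p t} ∧ Set.BijOn f {t | p t} {t | q t} := by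
  have hmono : StrictMonoOn f {t | p t} := fun t ht t' ht' hlt =>
    (count_monotone q).reflect_lt <| by
      rw [hrank t ht, hrank t' ht']
      exact count_strict_mono ht hlt
  refine ⟨hmono, hfq, hmono.injOn, fun u (hu : q u) => ?_⟩
  have hk : count q u < count p (u + 1) :=
    (count_lt_count_succ_iff.2 hu).trans_le (hle _)
  have hfin : ∀ hf : (Set.ofPred p).Finite, count q u < #hf.toFinset :=
    fun hf => hk.trans_le (count_le_card hf _)
  refine ⟨nth p (count q u), nth_mem _ hfin, count_injective (hfq _ (nth_mem _ hfin)) hu ?_⟩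
  rw [hrank _ (nth_mem _ hfin), count_nth hfin]

end Nat

open Nat

section Queue

variable {α : Type*} [DecidableEq α] {A C : ℕ → α} {i : α} {X : ℕ → ℕ}

theorem queue_add_count_completions_eq (hX0 : X 0 = 0)
    (hXrec : ∀ t, 1 ≤ t →
      (X t : ℤ) = X (t - 1) + (if A t = i then 1 else 0) - (if C t = i then 1 else 0))
    (t : ℕ) :
    X t + count (fun s => 1 ≤ s ∧ C s = i) (t + 1) = count (fun s => 1 ≤ s ∧ A s = i) (t + 1) := by
  induction t with
  | zero => simp [hX0, count_succ]
  | succ t ih =>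
    have h := hXrec (t + 1) (by omega)
    rw [count_succ _ (t + 1), count_succ _ (t + 1)]
    simp only [Nat.add_sub_cancel, le_add_iff_nonneg_left, Nat.zero_le, true_and] at h ⊢
    split_ifs at h ⊢ <;> omega

theorem count_completions_le_count_arrivals
    (hcons : ∀ t, X t + count (fun s => 1 ≤ s ∧ C s = i) (t + 1) =
      count (fun s => 1 ≤ s ∧ A s = i) (t + 1))
    (m : ℕ) : count (fun s => 1 ≤ s ∧ C s = i) m ≤ count (fun s => 1 ≤ s ∧ A s = i) m := by
  rcases m with _ | m
  · simp
  · have := hcons m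
    omega

theorem isLeast_count_completions_of_isLeast_sum
    (hcons : ∀ t, X t + count (fun s => 1 ≤ s ∧ C s = i) (t + 1) =
      count (fun s => 1 ≤ s ∧ A s = i) (t + 1))
    {t R : ℕ} (ht : 1 ≤ t) (hA : A t = i)
    (hR : IsLeast {r : ℕ | (∑ s ∈ Icc t (t + r), (if C s = i then 1 else 0))
      = X (t - 1) + (if A t = i then 1 else 0)} R) :
    IsLeast {r | count (fun s => 1 ≤ s ∧ C s = i) (t + r + 1) =
      count (fun s => 1 ≤ s ∧ A s = i) t + 1} R := by
  convert hR using 1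
  ext r
  have hsum : ∑ s ∈ Icc t (t + r), (if 1 ≤ s ∧ C s = i then 1 else 0) =
      ∑ s ∈ Icc t (t + r), (if C s = i then 1 else 0) :=
    sum_congr rfl fun s hs => by simp only [(mem_Icc.1 hs).1.trans' ht, true_and]
  have hprev := hcons (t - 1)
  have hcount := count_add_sum_Icc_ite (fun s => 1 ≤ s ∧ C s = i) t r
  rw [Nat.sub_add_cancel ht] at hprev
  rw [hsum] at hcount
  simp only [Set.mem_ofPred_eq, if_pos hA]
  omega

end Queue

theorem arrival_completion_bijection_general (n : ℕ) (i : Fin n)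
    (A C : ℕ → Fin n) (X R D : ℕ → ℕ)
    (hX0 : X 0 = 0)
    (hXrec : ∀ t, 1 ≤ t →
      (X t : ℤ) = X (t - 1) + (if A t = i then 1 else 0) - (if C t = i then 1 else 0))
    (hR : ∀ t, 1 ≤ t →
      IsLeast {r : ℕ | (∑ s ∈ Finset.Icc t (t + r), (if C s = i then 1 else 0))
        = X (t - 1) + (if A t = i then 1 else 0)} (R t))
    (hD : ∀ t, D t = if A t = i then R t else 0) :
    StrictMonoOn (fun t => t + D t) {t | 1 ≤ t ∧ A t = i} ∧
    Set.BijOn (fun t => t + D t) {t | 1 ≤ t ∧ A t = i} {t | 1 ≤ t ∧ C t = i} := by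
  have hcons := queue_add_count_completions_eq hX0 hXrec
  have hle := count_completions_le_count_arrivals hcons
  have hmatch : ∀ t, 1 ≤ t ∧ A t = i →
      (1 ≤ t + D t ∧ C (t + D t) = i) ∧
        count (fun s => 1 ≤ s ∧ C s = i) (t + D t) = count (fun s => 1 ≤ s ∧ A s = i) t := by
    rintro t ⟨ht, hA⟩
    rw [hD, if_pos hA]
    exact apply_and_count_eq_of_isLeast (hle t)
      (isLeast_count_completions_of_isLeast_sum hcons ht hA (hR t ht))
  exact strictMonoOn_and_bijOn_of_count_eq _ (fun t ht => (hmatch t ht).1)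
    (fun t ht => (hmatch t ht).2) hle

/-- The map `t ↦ t + D_{i,t}` is a strictly increasing bijection from the set of
arrival rounds at client `i` onto the set of completion rounds at client `i`. -/
theorem arrival_completion_bijection (n : ℕ) (i : Fin n)
    (A C : ℕ → Fin n) (X R D : ℕ → ℕ)
    (hX0 : X 0 = 0)
    (hXrec : ∀ t, 1 ≤ t →
      (X t : ℤ) = X (t - 1) + (if A t = i then 1 else 0) - (if C t = i then 1 else 0))
    (hC : ∀ t, 1 ≤ t → C t = i → 0 < X (t - 1) + (if A t = i then 1 else 0))
    (hR : ∀ t, 1 ≤ t →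
      IsLeast {r : ℕ | (∑ s ∈ Finset.Icc t (t + r), (if C s = i then 1 else 0))
        = X (t - 1) + (if A t = i then 1 else 0)} (R t))
    (hD : ∀ t, D t = if A t = i then R t else 0)
    (hinf : {t | 1 ≤ t ∧ A t = i}.Infinite → {t | 1 ≤ t ∧ C t = i}.Infinite) :
    StrictMonoOn (fun t => t + D t) {t | 1 ≤ t ∧ A t = i} ∧
    Set.BijOn (fun t => t + D t) {t | 1 ≤ t ∧ A t = i} {t | 1 ≤ t ∧ C t = i} :=
  arrival_completion_bijection_general n i A C X R D hX0 hXrec hR hD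
end
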